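/- In the graph G on V = {x ∈ ℤ^{n+1} : Σx_i = 0, x_i ≡ x_j (mod n+1) ∀i,j}, with x adjacent to y iff y−x is an edge vector, the graph distance from any vertex x to the origin equals (max_i x_i − min_j x_j)/(n+1). -/

import Mathlib

/-!
The spread `max − min` is subadditive and equals `n + 1` on edge vectors, so it drops by at most
`n + 1` along each edge and the distance to the origin is at least spread/(n+1). Conversely,
subtracting the edge vector `eVec n S` of the set `S` of non-minimal coordinates lowers those by
`n + 1 − |S|` and raises the minimal ones by `|S|`; since distinct coordinates of a vertex differ by
at least `n + 1`, the spread drops by exactly `n + 1`, and iterating reaches the origin.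
-/

open Finset

/-- The vertex set of the 1-skeleton of the Ã_n Coxeter complex:
integer vectors summing to zero with all pairwise coordinate differences divisible by n+1. -/
def inV (n : ℕ) (x : Fin (n+1) → ℤ) : Prop :=
  (∑ i, x i = 0) ∧ ∀ i j, ((n : ℤ) + 1) ∣ x i - x j

/-- Maximum coordinate. -/
def maxC (n : ℕ) (x : Fin (n+1) → ℤ) : ℤ := univ.sup' univ_nonempty x

/-- Minimum coordinate. -/
def minC (n : ℕ) (x : Fin (n+1) → ℤ) : ℤ := univ.inf' univ_nonempty x

/-- An edge vector: coordinates sum to 0, pairwise differences divisible by n+1,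
and max minus min equals n+1. -/
def isEdge (n : ℕ) (e : Fin (n+1) → ℤ) : Prop :=
  inV n e ∧ maxC n e - minC n e = (n : ℤ) + 1

/-- Height of a vertex: (max − min)/(n+1). -/
def height (n : ℕ) (x : Fin (n+1) → ℤ) : ℤ :=
  (maxC n x - minC n x) / ((n : ℤ) + 1)

/-- The edge vector associated to a subset S: value n+1−|S| on S and −|S| off S. -/
def eVec (n : ℕ) (S : Finset (Fin (n+1))) : Fin (n+1) → ℤ :=
  fun i => if i ∈ S then (n : ℤ) + 1 - S.card else -(S.card : ℤ)

lemma inV_zero (n : ℕ) : inV n 0 := ⟨by simp, fun i j => by simp⟩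

lemma maxC_neg (n : ℕ) (x : Fin (n+1) → ℤ) : maxC n (-x) = - minC n x := by
  unfold maxC minC
  apply le_antisymm
  · apply Finset.sup'_le
    intro i hi
    have h1 : univ.inf' univ_nonempty x ≤ x i := Finset.inf'_le _ hi
    have h2 : (-x) i = -(x i) := rfl
    omega
  · obtain ⟨i, hi, h⟩ := Finset.exists_mem_eq_inf' (univ_nonempty) x
    rw [h]
    have h1 : (-x) i ≤ univ.sup' univ_nonempty (-x) := Finset.le_sup' (-x) hi
    have h2 : (-x) i = -(x i) := rfl
    omega

lemma minC_neg (n : ℕ) (x : Fin (n+1) → ℤ) : minC n (-x) = - maxC n x := by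
  have := maxC_neg n (-x)
  rw [neg_neg] at this
  unfold maxC minC at *
  omega

lemma isEdge_neg {n : ℕ} {e : Fin (n+1) → ℤ} (h : isEdge n e) : isEdge n (-e) := by
  obtain ⟨⟨h1, h2⟩, h3⟩ := h
  refine ⟨⟨by simp [h1], fun i j => by
    have h' : (-e) i - (-e) j = e j - e i := by
      simp only [Pi.neg_apply]; ring
    rw [h']; exact h2 j i⟩, ?_⟩
  rw [maxC_neg, minC_neg]
  omega

/-- The graph G on V with edge-vector adjacency. -/
def G (n : ℕ) : SimpleGraph {x : Fin (n+1) → ℤ // inV n x} where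
  Adj x y := isEdge n (y.1 - x.1)
  symm := by
    constructor
    intro x y h
    have := isEdge_neg h
    rwa [neg_sub] at this
  loopless := by
    constructor
    intro x h
    obtain ⟨-, h3⟩ := h
    rw [sub_self] at h3
    simp [maxC, minC] at h3
    omega

section Coordinates

variable {n : ℕ}

lemma le_maxC (x : Fin (n+1) → ℤ) (i : Fin (n+1)) : x i ≤ maxC n x :=
  le_sup' x (mem_univ i)

lemma minC_le (x : Fin (n+1) → ℤ) (i : Fin (n+1)) : minC n x ≤ x i :=
  inf'_le x (mem_univ i)

lemma exists_eq_maxC (x : Fin (n+1) → ℤ) : ∃ i, x i = maxC n x :=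
  let ⟨i, _, h⟩ := exists_mem_eq_sup' univ_nonempty x
  ⟨i, h.symm⟩

lemma exists_eq_minC (x : Fin (n+1) → ℤ) : ∃ i, x i = minC n x :=
  let ⟨i, _, h⟩ := exists_mem_eq_inf' univ_nonempty x
  ⟨i, h.symm⟩

@[simp]
lemma maxC_zero : maxC n 0 = 0 := sup'_const _ _

@[simp]
lemma minC_zero : minC n 0 = 0 := inf'_const _ _

lemma maxC_sub_minC_eq_of_bounds {x : Fin (n+1) → ℤ} {a b : ℤ}
    (hx : ∀ i, a ≤ x i ∧ x i ≤ b) {i j : Fin (n+1)} (hi : x i = a) (hj : x j = b) :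
    maxC n x - minC n x = b - a := by
  have hmax : maxC n x = b :=
    le_antisymm (sup'_le _ _ fun k _ => (hx k).2) (hj ▸ le_maxC x j)
  have hmin : minC n x = a :=
    le_antisymm (hi ▸ minC_le x i) (le_inf' _ _ fun k _ => (hx k).1)
  rw [hmax, hmin]

lemma maxC_sub_minC_add_le (x y : Fin (n+1) → ℤ) :
    maxC n (x + y) - minC n (x + y) ≤ (maxC n x - minC n x) + (maxC n y - minC n y) := by
  have hmax : maxC n (x + y) ≤ maxC n x + maxC n y :=
    sup'_le _ _ fun i _ => add_le_add (le_maxC x i) (le_maxC y i)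
  have hmin : minC n x + minC n y ≤ minC n (x + y) :=
    le_inf' _ _ fun i _ => add_le_add (minC_le x i) (minC_le y i)
  linarith

end Coordinates

section Vertices

variable {n : ℕ} {x y : Fin (n+1) → ℤ}

lemma inV.sub (hx : inV n x) (hy : inV n y) : inV n (x - y) := by
  refine ⟨?_, fun i j => ?_⟩
  · simp [sum_sub_distrib, hx.1, hy.1]
  · have h : (x - y) i - (x - y) j = (x i - x j) - (y i - y j) := by simp only [Pi.sub_apply]; ring
    exact h ▸ dvd_sub (hx.2 i j) (hy.2 i j)

lemma inV.add_le_of_lt (hx : inV n x) {i j : Fin (n+1)} (h : x i < x j) :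
    x i + ((n : ℤ) + 1) ≤ x j := by
  have := Int.le_of_dvd (sub_pos.2 h) (hx.2 j i)
  linarith

lemma inV.exists_maxC_sub_minC_eq (hx : inV n x) :
    ∃ k : ℕ, maxC n x - minC n x = ((n : ℤ) + 1) * k := by
  obtain ⟨i, hi⟩ := exists_eq_maxC x
  obtain ⟨j, hj⟩ := exists_eq_minC x
  obtain ⟨c, hc⟩ := hx.2 i j
  have hc0 : 0 ≤ c := by
    refine nonneg_of_mul_nonneg_right ?_ (by positivity : (0 : ℤ) < n + 1)
    linarith [minC_le x i]
  lift c to ℕ using hc0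
  exact ⟨c, by rw [← hi, ← hj, hc]⟩

lemma inV.eq_zero_of_maxC_le_minC (hx : inV n x) (h : maxC n x ≤ minC n x) : x = 0 := by
  have hconst : ∀ i, x i = x 0 := fun i =>
    le_antisymm (by linarith [le_maxC x i, minC_le x 0]) (by linarith [le_maxC x 0, minC_le x i])
  have hsum : ((n : ℤ) + 1) * x 0 = 0 := by
    rw [← hx.1, sum_congr rfl fun i _ => hconst i]
    simp
  have h0 : x 0 = 0 := (mul_eq_zero.1 hsum).resolve_left (by positivity)
  exact funext fun i => (hconst i).trans h0

end Vertices

section EdgeVectors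

variable {n : ℕ}

lemma eVec_apply (S : Finset (Fin (n+1))) (i : Fin (n+1)) :
    eVec n S i = ((n : ℤ) + 1) * (if i ∈ S then 1 else 0) - S.card := by
  unfold eVec
  split_ifs <;> ring

lemma inV_eVec (S : Finset (Fin (n+1))) : inV n (eVec n S) := by
  refine ⟨?_, fun i j => ?_⟩
  · simp only [eVec_apply, sum_sub_distrib, ← mul_sum, sum_boole]
    simp
  · rw [eVec_apply, eVec_apply, sub_sub_sub_cancel_right, ← mul_sub]
    exact dvd_mul_right _ _

lemma isEdge_eVec {S : Finset (Fin (n+1))} {i j : Fin (n+1)} (hi : i ∈ S) (hj : j ∉ S) :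
    isEdge n (eVec n S) := by
  refine ⟨inV_eVec S, ?_⟩
  rw [maxC_sub_minC_eq_of_bounds (a := -(S.card : ℤ)) (b := (n : ℤ) + 1 - S.card)
    (fun k => ?_) (i := j) (j := i) (by simp [eVec, hj]) (by simp [eVec, hi])]
  · ring
  · unfold eVec
    split_ifs <;> constructor <;> linarith

end EdgeVectors

section Graph

open SimpleGraph

variable {n : ℕ}

lemma inV.exists_isEdge_maxC_sub_minC_sub {x : Fin (n+1) → ℤ} (hx : inV n x)
    (h : minC n x < maxC n x) :
    ∃ S, isEdge n (eVec n S) ∧ maxC n (x - eVec n S) - minC n (x - eVec n S) =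
      maxC n x - minC n x - ((n : ℤ) + 1) := by
  obtain ⟨i, hi⟩ := exists_eq_minC x
  obtain ⟨j, hj⟩ := exists_eq_maxC x
  set S := univ.filter (minC n x < x ·)
  have hjS : j ∈ S := by simpa [S, hj] using h
  have hiS : i ∉ S := by simp [S, hi]
  have hgap := hx.add_le_of_lt (i := i) (j := j) (by rw [hi, hj]; exact h)
  refine ⟨S, isEdge_eVec hjS hiS, ?_⟩
  have hbounds : ∀ k, minC n x + S.card ≤ (x - eVec n S) k ∧
      (x - eVec n S) k ≤ maxC n x - ((n : ℤ) + 1) + S.card := by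
    intro k
    have hk : minC n x < x k → minC n x + ((n : ℤ) + 1) ≤ x k := fun hk =>
      hi ▸ hx.add_le_of_lt (hi ▸ hk)
    by_cases hkS : k ∈ S
    · have := hk (by simpa [S] using hkS)
      simp only [Pi.sub_apply, eVec, if_pos hkS]
      constructor <;> linarith [le_maxC x k]
    · have : x k = minC n x := le_antisymm (by simpa [S] using hkS) (minC_le x k)
      simp only [Pi.sub_apply, eVec, if_neg hkS]
      constructor <;> linarith
  rw [maxC_sub_minC_eq_of_bounds hbounds (i := i) (j := j)
    (by simp [eVec, hiS, hi]) (by simp [eVec, hjS, hj]; ring)]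
  ring

lemma maxC_sub_minC_le_of_adj {x y : {x : Fin (n+1) → ℤ // inV n x}} (h : (G n).Adj x y) :
    maxC n x.1 - minC n x.1 ≤ maxC n y.1 - minC n y.1 + ((n : ℤ) + 1) := by
  have hedge : isEdge n (x.1 - y.1) := h.symm
  have := maxC_sub_minC_add_le y.1 (x.1 - y.1)
  rw [add_sub_cancel] at this
  linarith [hedge.2]

lemma maxC_sub_minC_le_of_walk {x y : {x : Fin (n+1) → ℤ // inV n x}} (w : (G n).Walk x y) :
    maxC n x.1 - minC n x.1 ≤ maxC n y.1 - minC n y.1 + ((n : ℤ) + 1) * w.length := by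
  induction w with
  | nil => simp
  | cons h p ih =>
    rw [Walk.length_cons]
    push_cast
    linarith [maxC_sub_minC_le_of_adj h]

lemma exists_walk_length_eq_of_maxC_sub_minC (k : ℕ) (x : {x : Fin (n+1) → ℤ // inV n x})
    (hx : maxC n x.1 - minC n x.1 = ((n : ℤ) + 1) * k) :
    ∃ w : (G n).Walk x ⟨0, inV_zero n⟩, w.length = k := by
  induction k generalizing x with
  | zero =>
    obtain rfl : x = ⟨0, inV_zero n⟩ :=
      Subtype.ext (x.2.eq_zero_of_maxC_le_minC (by push_cast at hx; linarith))
    exact ⟨Walk.nil, rfl⟩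
  | succ k ih =>
    have hlt : minC n x.1 < maxC n x.1 := by
      have : (0 : ℤ) < ((n : ℤ) + 1) * (k + 1 : ℕ) := by positivity
      linarith
    obtain ⟨S, hS, hspread⟩ := x.2.exists_isEdge_maxC_sub_minC_sub hlt
    let y : {x : Fin (n+1) → ℤ // inV n x} := ⟨x.1 - eVec n S, x.2.sub (inV_eVec S)⟩
    have hadj : (G n).Adj x y := by
      show isEdge n (x.1 - eVec n S - x.1)
      rw [sub_sub_cancel_left]
      exact isEdge_neg hS
    obtain ⟨w, hw⟩ := ih y (by rw [hspread, hx]; push_cast; ring)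
    exact ⟨Walk.cons hadj w, by rw [Walk.length_cons, hw]⟩

end Graph

theorem stmt4_general (n : ℕ) (x : {x : Fin (n+1) → ℤ // inV n x}) :
    ((G n).dist x ⟨0, inV_zero n⟩ : ℤ) =
      (maxC n x.1 - minC n x.1) / ((n : ℤ) + 1) := by
  obtain ⟨k, hk⟩ := x.2.exists_maxC_sub_minC_eq
  obtain ⟨w, hw⟩ := exists_walk_length_eq_of_maxC_sub_minC k x hk
  have hupper : (G n).dist x ⟨0, inV_zero n⟩ ≤ k := hw ▸ SimpleGraph.dist_le w
  obtain ⟨p, hp⟩ := w.reachable.exists_walk_length_eq_dist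
  have hlower : ((n : ℤ) + 1) * k ≤ ((n : ℤ) + 1) * (G n).dist x ⟨0, inV_zero n⟩ := by
    simpa [hk, hp] using maxC_sub_minC_le_of_walk p
  have hdist : (G n).dist x ⟨0, inV_zero n⟩ = k := by
    have := le_of_mul_le_mul_left hlower (by positivity)
    omega
  rw [hdist, hk, Int.mul_ediv_cancel_left _ (by positivity)]

/-- the graph distance from a vertex to the origin equals
(max − min)/(n+1). -/
theorem stmt4 (n : ℕ) (hn : 1 ≤ n) (x : {x : Fin (n+1) → ℤ // inV n x}) :
    ((G n).dist x ⟨0, inV_zero n⟩ : ℤ) =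
      (maxC n x.1 - minC n x.1) / ((n : ℤ) + 1) :=
  stmt4_general n x
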